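/- arXiv:1405.3296 — 4 statements merged into one kernel-verified Lean document; each statement's English description precedes it below -/
import Mathlib

section
/- In the set-cover instance game with the deterministic greedy algorithm, if a joint strategy S = (S_1,...,S_m) contains two distinct agents i and j with S_i ∩ S_j ≠ ∅, then S is not a pure Nash equilibrium. -/
open Finset

section SCIG

variable {α : Type*} [DecidableEq α] {m : ℕ}

/-- Inner loop of the greedy algorithm: scan the remaining order, keeping the
subset covering the most as-yet-uncovered elements (ties broken by order). -/
def bestIdx (S : Fin m → Finset α) (Ucov : Finset α) : List (Fin m) → Fin m → Fin m
  | [], b => b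
  | i :: rest, b =>
      bestIdx S Ucov rest (if (S b ∩ Ucov).card < (S i ∩ Ucov).card then i else b)

/-- Greedy set-cover: repeatedly select the subset (scanned in `order`) covering
the most uncovered elements, until nothing new can be covered.  Returns the
selected agents, in order of selection. -/
def greedyList (S : Fin m → Finset α) (order : List (Fin m)) (Ucov : Finset α) :
    List (Fin m) :=
  match order with
  | [] => []
  | b :: rest =>
    let best := bestIdx S Ucov rest b
    if h : (S best ∩ Ucov).Nonempty then
      best :: greedyList S (b :: rest) (Ucov \ S best)
    else []
termination_by Ucov.card
decreasing_by
  apply Finset.card_lt_card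
  refine ⟨Finset.sdiff_subset, fun hsub => ?_⟩
  obtain ⟨x, hx⟩ := h
  have hx1 := (Finset.mem_inter.mp hx).1
  have hx2 := (Finset.mem_inter.mp hx).2
  have := hsub hx2
  simp [Finset.mem_sdiff, hx1] at this
  exact this.2 hx1

/-- The set-cover instance induced by a joint strategy: its universe. -/
def unionSet (S : Fin m → Finset α) : Finset α := Finset.univ.biUnion S

/-- The cover computed by the deterministic greedy algorithm (fixed order 1..m). -/
def coverD (S : Fin m → Finset α) : Finset (Fin m) :=
  (greedyList S (List.finRange m) (unionSet S)).toFinset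

/-- Utility of agent `i` in the deterministic game. -/
noncomputable def utilD (beta alpha : ℝ) (S : Fin m → Finset α) (i : Fin m) : ℝ :=
  (if i ∈ coverD S then beta else 0) - alpha * (S i).card

/-- Pure Nash equilibrium of the deterministic game. -/
def IsNashD (beta alpha : ℝ) (S : Fin m → Finset α) : Prop :=
  ∀ (i : Fin m) (T : Finset α),
    utilD beta alpha (Function.update S i T) i ≤ utilD beta alpha S i

/-- Probability (over a uniformly random permutation of the agents) that agent
`i`'s subset is selected by the non-deterministic greedy algorithm. -/
noncomputable def probSel (S : Fin m → Finset α) (i : Fin m) : ℝ :=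
  (Finset.univ.filter (fun π : Equiv.Perm (Fin m) =>
      i ∈ greedyList S ((List.finRange m).map π) (unionSet S))).card
    / (Nat.factorial m)

/-- Expected utility of agent `i` in the non-deterministic game. -/
noncomputable def utilN (beta alpha : ℝ) (S : Fin m → Finset α) (i : Fin m) : ℝ :=
  beta * probSel S i - alpha * (S i).card

/-- Pure Nash equilibrium of the non-deterministic game. -/
def IsNashN (beta alpha : ℝ) (S : Fin m → Finset α) : Prop :=
  ∀ (i : Fin m) (T : Finset α),
    utilN beta alpha (Function.update S i T) i ≤ utilN beta alpha S i

end SCIG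

/-!
Take `x ∈ S i ∩ S j` and let `a ∈ {i, j}` be an agent that is not the one selected at the
step of the greedy run that first covers `x`. Deleting `x` from `S a` does not change the run:
before that step `a` is never the argmax, and lowering only its count of uncovered elements
cannot move the first argmax; from that step on `x` is covered, so `S a` and `(S a).erase x`
meet the uncovered set in the same elements. The universe does not change either, since `x`
stays in the other agent's set. So if `a` is in the cover, this deviation saves `alpha` at no
loss, and if it is not, deviating to `∅` saves `alpha * #(S a) > 0`.
-/

namespace List

variable {ι β : Type*} [DecidableEq ι] [LinearOrder β]

theorem argmax_eq_some_of_le_of_eq {f g : ι → β} {l : List ι} {w : ι}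
    (h : l.argmax f = some w) (hle : ∀ c ∈ l, g c ≤ f c) (hw : g w = f w) :
    l.argmax g = some w := by
  rw [argmax_eq_some_iff] at h ⊢
  obtain ⟨hmem, hmax, hfirst⟩ := h
  refine ⟨hmem, fun c hc => (hle c hc).trans (hw ▸ hmax c hc), fun c hc hwc => hfirst c hc ?_⟩
  exact hw ▸ hwc.trans (hle c hc)

end List

section Greedy

variable {α : Type*} [DecidableEq α] {m : ℕ}

theorem bestIdx_eq_argmax (S : Fin m → Finset α) (U : Finset α) (l : List (Fin m)) (b : Fin m) :
    (b :: l).argmax (fun c => #(S c ∩ U)) = some (bestIdx S U l b) := by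
  suffices ∀ b, l.foldl (List.argAux fun c d => #(S d ∩ U) < #(S c ∩ U)) (some b) =
      some (bestIdx S U l b) from this b
  induction l with
  | nil => exact fun _ => rfl
  | cons i rest ih =>
    intro b
    rw [List.foldl_cons, bestIdx, ← ih]
    congr 1
    simp only [List.argAux, apply_ite some]

theorem bestIdx_eq_of_inter_subset {S S' : Fin m → Finset α} {U : Finset α} {l : List (Fin m)}
    {b : Fin m} (hsub : ∀ c, S' c ∩ U ⊆ S c ∩ U)
    (hbest : S' (bestIdx S U l b) ∩ U = S (bestIdx S U l b) ∩ U) :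
    bestIdx S' U l b = bestIdx S U l b :=
  Option.some_injective _ <| (bestIdx_eq_argmax S' U l b).symm.trans <|
    List.argmax_eq_some_of_le_of_eq (bestIdx_eq_argmax S U l b)
      (fun c _ => card_le_card (hsub c)) (congrArg card hbest)

theorem card_sdiff_lt_of_inter_nonempty {A U : Finset α} (h : (A ∩ U).Nonempty) :
    #(U \ A) < #U := by
  rw [← sdiff_inter_self_right]
  exact card_lt_card (sdiff_ssubset inter_subset_right h)

theorem greedyList_cons (S : Fin m → Finset α) (b : Fin m) (rest : List (Fin m))
    (U : Finset α) :
    greedyList S (b :: rest) U =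
      if (S (bestIdx S U rest b) ∩ U).Nonempty then
        bestIdx S U rest b :: greedyList S (b :: rest) (U \ S (bestIdx S U rest b))
      else [] := by
  rw [greedyList, dite_eq_ite]

theorem greedyList_cons_eq_of_inter_subset {S S' : Fin m → Finset α} {b : Fin m}
    {rest : List (Fin m)} {U : Finset α} (hsub : ∀ c, S' c ∩ U ⊆ S c ∩ U)
    (hbest : S' (bestIdx S U rest b) ∩ U = S (bestIdx S U rest b) ∩ U)
    (htail : (S (bestIdx S U rest b) ∩ U).Nonempty →
      greedyList S' (b :: rest) (U \ S (bestIdx S U rest b)) =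
        greedyList S (b :: rest) (U \ S (bestIdx S U rest b))) :
    greedyList S' (b :: rest) U = greedyList S (b :: rest) U := by
  rw [greedyList_cons S' b rest U, greedyList_cons S b rest U,
    bestIdx_eq_of_inter_subset hsub hbest, hbest]
  split_ifs with hne
  · rw [← sdiff_inter_self_right, hbest, sdiff_inter_self_right, htail hne]
  · rfl

theorem greedyList_congr {S S' : Fin m → Finset α} (order : List (Fin m)) (U : Finset α)
    (h : ∀ c, S' c ∩ U = S c ∩ U) : greedyList S' order U = greedyList S order U := by
  match order with
  | [] => rw [greedyList, greedyList]
  | b :: rest =>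
    refine greedyList_cons_eq_of_inter_subset (fun c => (h c).subset) (h _) fun hne =>
      greedyList_congr _ _ fun c => ?_
    rw [← inter_sdiff_assoc, h c, inter_sdiff_assoc]
termination_by #U
decreasing_by exact card_sdiff_lt_of_inter_nonempty hne

theorem update_erase_subset (S : Fin m → Finset α) (a : Fin m) (x : α) (c : Fin m) :
    Function.update S a ((S a).erase x) c ⊆ S c := by
  rcases eq_or_ne c a with rfl | hc
  · simpa using erase_subset x (S c)
  · rw [Function.update_of_ne hc]

theorem update_erase_inter_of_notMem (S : Fin m → Finset α) (a : Fin m) {x : α} {V : Finset α}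
    (hx : x ∉ V) (c : Fin m) : Function.update S a ((S a).erase x) c ∩ V = S c ∩ V := by
  rcases eq_or_ne c a with rfl | hc
  · rw [Function.update_self, erase_inter, erase_eq_of_notMem fun h => hx (mem_inter.mp h).2]
  · rw [Function.update_of_ne hc]

theorem exists_greedyList_update_erase_eq {S : Fin m → Finset α} {x : α} {i j : Fin m}
    (hij : i ≠ j) (hxi : x ∈ S i) (hxj : x ∈ S j) (order : List (Fin m)) (hi : i ∈ order)
    (U : Finset α) (hxU : x ∈ U) :
    ∃ a, (a = i ∨ a = j) ∧
      greedyList (Function.update S a ((S a).erase x)) order U = greedyList S order U := by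
  match order with
  | [] => exact absurd hi List.not_mem_nil
  | b :: rest =>
    set w := bestIdx S U rest b
    have hne : (S w ∩ U).Nonempty := by
      have hiw : #(S i ∩ U) ≤ #(S w ∩ U) :=
        List.le_of_mem_argmax (f := fun c => #(S c ∩ U)) hi (bestIdx_eq_argmax S U rest b)
      exact card_pos.mp ((card_pos.mpr ⟨x, mem_inter.mpr ⟨hxi, hxU⟩⟩).trans_le hiw)
    suffices ∃ a, (a = i ∨ a = j) ∧ a ≠ w ∧
        greedyList (Function.update S a ((S a).erase x)) (b :: rest) (U \ S w) =
          greedyList S (b :: rest) (U \ S w) by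
      obtain ⟨a, haij, haw, htail⟩ := this
      refine ⟨a, haij, greedyList_cons_eq_of_inter_subset
        (fun c => inter_subset_inter_right (update_erase_subset S a x c)) ?_ fun _ => htail⟩
      rw [Function.update_of_ne haw.symm]
    by_cases hxw : x ∈ S w
    · obtain ⟨a, haij, haw⟩ : ∃ a, (a = i ∨ a = j) ∧ a ≠ w := by
        by_cases hwi : w = i
        · exact ⟨j, Or.inr rfl, hwi ▸ hij.symm⟩
        · exact ⟨i, Or.inl rfl, Ne.symm hwi⟩
      refine ⟨a, haij, haw, greedyList_congr _ _ (update_erase_inter_of_notMem S a ?_)⟩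
      exact fun h => (mem_sdiff.mp h).2 hxw
    · obtain ⟨a, haij, htail⟩ := exists_greedyList_update_erase_eq hij hxi hxj (b :: rest) hi
        (U \ S w) (mem_sdiff.mpr ⟨hxU, hxw⟩)
      refine ⟨a, haij, ?_, htail⟩
      rintro rfl
      rcases haij with rfl | rfl <;> contradiction
termination_by #U
decreasing_by exact card_sdiff_lt_of_inter_nonempty hne

theorem unionSet_update_erase {S : Fin m → Finset α} {a b : Fin m} {x : α} (hba : b ≠ a)
    (hxb : x ∈ S b) : unionSet (Function.update S a ((S a).erase x)) = unionSet S := by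
  refine (biUnion_mono fun c _ => update_erase_subset S a x c).antisymm fun y hy => ?_
  obtain ⟨c, -, hyc⟩ := mem_biUnion.mp hy
  refine mem_biUnion.mpr ?_
  by_cases hyx : y = x
  · exact ⟨b, mem_univ b, by rwa [Function.update_of_ne hba, hyx]⟩
  · refine ⟨c, mem_univ c, ?_⟩
    rcases eq_or_ne c a with rfl | hca
    · rw [Function.update_self]
      exact mem_erase.mpr ⟨hyx, hyc⟩
    · rwa [Function.update_of_ne hca]

theorem exists_coverD_update_erase_eq {S : Fin m → Finset α} {x : α} {i j : Fin m}
    (hij : i ≠ j) (hxi : x ∈ S i) (hxj : x ∈ S j) :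
    ∃ a, x ∈ S a ∧ coverD (Function.update S a ((S a).erase x)) = coverD S := by
  obtain ⟨a, haij, hgreedy⟩ := exists_greedyList_update_erase_eq hij hxi hxj _
    (List.mem_finRange i) (unionSet S) (mem_biUnion.mpr ⟨i, mem_univ i, hxi⟩)
  obtain ⟨b, hba, hxb, hxa⟩ : ∃ b, b ≠ a ∧ x ∈ S b ∧ x ∈ S a := by
    rcases haij with rfl | rfl
    exacts [⟨j, hij.symm, hxj, hxi⟩, ⟨i, hij, hxi, hxj⟩]
  refine ⟨a, hxa, ?_⟩
  rw [coverD, unionSet_update_erase hba hxb, hgreedy, coverD]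

theorem utilD_lt_utilD_update {beta alpha : ℝ} (hbeta : 0 ≤ beta) (halpha : 0 < alpha)
    {S : Fin m → Finset α} {k : Fin m} {T : Finset α}
    (hcover : k ∈ coverD S → k ∈ coverD (Function.update S k T)) (hcard : #T < #(S k)) :
    utilD beta alpha S k < utilD beta alpha (Function.update S k T) k := by
  have hcost : alpha * #T < alpha * #(S k) :=
    mul_lt_mul_of_pos_left (by exact_mod_cast hcard) halpha
  rw [utilD, utilD, Function.update_self]
  by_cases hk : k ∈ coverD S
  · rw [if_pos hk, if_pos (hcover hk)]
    linarith
  · rw [if_neg hk]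
    split_ifs <;> linarith

end Greedy

/-- With the deterministic greedy algorithm, a joint strategy in
which two distinct agents' strategies overlap is not a pure Nash equilibrium. -/
theorem scigD_overlap_not_nash {α : Type*} [DecidableEq α] {m : ℕ}
    (beta alpha : ℝ) (hbeta : 0 < beta) (halpha : 0 < alpha)
    (S : Fin m → Finset α) (i j : Fin m) (hij : i ≠ j)
    (hover : (S i ∩ S j).Nonempty) :
    ¬ IsNashD beta alpha S := by
  obtain ⟨x, hx⟩ := hover
  obtain ⟨a, hxa, hcover⟩ :=
    exists_coverD_update_erase_eq hij (mem_inter.mp hx).1 (mem_inter.mp hx).2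
  intro hnash
  by_cases ha : a ∈ coverD S
  · exact (hnash a _).not_gt <| utilD_lt_utilD_update hbeta.le halpha
      (fun _ => hcover ▸ ha) (card_erase_lt_of_mem hxa)
  · exact (hnash a ∅).not_gt <| utilD_lt_utilD_update hbeta.le halpha
      (fun h => absurd h ha) (card_pos.mpr ⟨x, hxa⟩)
end

section
/- In the set-cover instance game with the non-deterministic greedy algorithm, with α < β/2 and m > n, if S is a pure Nash equilibrium containing at least one agent i with S_i = U, then every other agent j has either S_j = U or S_j = ∅. -/
open Finset

/-! If agent `i` covers the whole instance, the first greedy pick covers at least as much as `i`,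
hence everything, and the algorithm stops there. So only agents covering the whole instance are
ever selected, and an agent with a proper nonempty subset pays for it without any chance of being
selected; dropping to `∅` is a profitable deviation. -/

section Greedy

variable {α : Type*} [DecidableEq α] {m : ℕ}

lemma card_inter_le_card_inter_bestIdx (S : Fin m → Finset α) (U : Finset α)
    (l : List (Fin m)) (b : Fin m) {x : Fin m} (hx : x ∈ b :: l) :
    #(S x ∩ U) ≤ #(S (bestIdx S U l b) ∩ U) := by
  induction l generalizing b x with
  | nil => simp_all [bestIdx]
  | cons y rest ih =>
    rw [bestIdx]
    set b' := if #(S b ∩ U) < #(S y ∩ U) then y else b with hb'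
    have hb'_max : #(S b ∩ U) ≤ #(S b' ∩ U) ∧ #(S y ∩ U) ≤ #(S b' ∩ U) := by
      rw [hb']; split_ifs <;> omega
    have h_best := ih b' (x := b') List.mem_cons_self
    simp only [List.mem_cons] at hx
    rcases hx with rfl | rfl | hx
    · omega
    · omega
    · exact ih b' (List.mem_cons_of_mem _ hx)

lemma greedyList_empty (S : Fin m → Finset α) (l : List (Fin m)) :
    greedyList S l ∅ = [] := by
  cases l <;> simp [greedyList]

lemma subset_of_mem_greedyList {S : Fin m → Finset α} {l : List (Fin m)} {U : Finset α}
    {i j : Fin m} (hil : i ∈ l) (hU : U ⊆ S i) (hj : j ∈ greedyList S l U) : U ⊆ S j := by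
  cases l with
  | nil => simp at hil
  | cons b rest =>
    set best := bestIdx S U rest b
    have h_best : U ⊆ S best := by
      have h_le := card_inter_le_card_inter_bestIdx S U rest b hil
      rw [inter_eq_right.mpr hU] at h_le
      exact inter_eq_right.mp (eq_of_subset_of_card_le inter_subset_right h_le)
    rw [greedyList] at hj
    split_ifs at hj
    · rw [sdiff_eq_empty_iff_subset.mpr h_best, greedyList_empty, List.mem_singleton] at hj
      exact hj ▸ h_best
    · simp at hj

lemma probSel_eq_zero_of_not_subset {S : Fin m → Finset α} {i j : Fin m}
    (hi : unionSet S ⊆ S i) (hij : ¬ S i ⊆ S j) : probSel S j = 0 := by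
  have h_never : ∀ π : Equiv.Perm (Fin m),
      j ∉ greedyList S ((List.finRange m).map π) (unionSet S) := fun π hj =>
    hij <| (subset_biUnion_of_mem S (mem_univ i)).trans <|
      subset_of_mem_greedyList (List.mem_map.mpr ⟨π.symm i, List.mem_finRange _, by simp⟩) hi hj
  simp [probSel, h_never]

end Greedy

theorem scigN_full_or_empty_general {α : Type*} [Fintype α] [DecidableEq α] {m : ℕ}
    (beta alpha : ℝ) (halpha : 0 < alpha)
    (S : Fin m → Finset α) (hN : IsNashN beta alpha S)
    (i : Fin m) (hi : S i = Finset.univ) :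
    ∀ j : Fin m, j ≠ i → S j = Finset.univ ∨ S j = ∅ := by
  intro j hji
  refine or_iff_not_imp_left.mpr fun hj_univ => ?_
  by_contra hj_empty
  have h_stay : probSel S j = 0 :=
    probSel_eq_zero_of_not_subset (hi ▸ subset_univ _) (by rwa [hi, univ_subset_iff])
  have h_leave : probSel (Function.update S j ∅) j = 0 := by
    refine probSel_eq_zero_of_not_subset (i := i) ?_ ?_ <;>
      rw [Function.update_of_ne hji.symm, hi]
    · exact subset_univ _
    · rw [Function.update_self, subset_empty, univ_eq_empty_iff]
      exact fun h => hj_empty (eq_empty_of_isEmpty _)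
  have h_cost : 0 < alpha * #(S j) :=
    mul_pos halpha (Nat.cast_pos.mpr (card_pos.mpr (nonempty_iff_ne_empty.mpr hj_empty)))
  have h_dev := hN j ∅
  simp only [utilN, h_stay, h_leave, Function.update_self, card_empty, Nat.cast_zero,
    mul_zero] at h_dev
  linarith

/-- With the non-deterministic greedy algorithm, α < β/2 and
m > n, if a pure Nash equilibrium has some agent with S_i = U, then every
other agent chooses either U or ∅. -/
theorem scigN_full_or_empty {α : Type*} [Fintype α] [DecidableEq α] {m : ℕ}
    (beta alpha : ℝ) (hbeta : 0 < beta) (halpha : 0 < alpha)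
    (hab : alpha < beta / 2) (hmn : Fintype.card α < m)
    (S : Fin m → Finset α) (hN : IsNashN beta alpha S)
    (i : Fin m) (hi : S i = Finset.univ) :
    ∀ j : Fin m, j ≠ i → S j = Finset.univ ∨ S j = ∅ :=
  scigN_full_or_empty_general beta alpha halpha S hN i hi
end

section
/- In the set-cover instance game with the non-deterministic greedy algorithm, if m ≤ n and α < β, then any joint strategy in which all m agents choose pairwise distinct single-element subsets is a pure Nash equilibrium. -/
open Finset

/-!
Against distinct singletons the greedy algorithm selects every agent, whatever the order: while
an agent's element is uncovered some subset still covers something new, and the only subset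
containing that element is the agent's own. So each agent gets `β - α`. A deviation to `∅` is never
selected and yields `0 < β - α`; a deviation to a nonempty `T` costs at least `α` and gains at
most `β`.
-/

section GreedyCover

variable {α : Type*} [DecidableEq α] {m : ℕ}

lemma card_inter_le_bestIdx (S : Fin m → Finset α) (U : Finset α) :
    ∀ (l : List (Fin m)) (b j : Fin m), j = b ∨ j ∈ l →
      (S j ∩ U).card ≤ (S (bestIdx S U l b) ∩ U).card
  | [], b, j, hj => by
    rcases hj with rfl | hj
    · exact le_rfl
    · simp at hj
  | i :: rest, b, j, hj => by
    set c := if (S b ∩ U).card < (S i ∩ U).card then i else b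
    have hc := card_inter_le_bestIdx S U rest c
    have hbc : (S b ∩ U).card ≤ (S c ∩ U).card := by simp only [c]; split_ifs <;> omega
    have hic : (S i ∩ U).card ≤ (S c ∩ U).card := by simp only [c]; split_ifs <;> omega
    rw [bestIdx]
    rcases hj with rfl | hj
    · exact hbc.trans (hc c (.inl rfl))
    rcases List.mem_cons.mp hj with rfl | hj
    · exact hic.trans (hc c (.inl rfl))
    · exact hc j (.inr hj)

lemma sdiff_ssubset_of_inter_nonempty {s t : Finset α} (h : (t ∩ s).Nonempty) : s \ t ⊂ s := by
  simpa only [sdiff_inter_self_right] using sdiff_ssubset inter_subset_right h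

lemma exists_mem_greedyList_of_mem (S : Fin m → Finset α) (U : Finset α) :
    ∀ (order : List (Fin m)) (j : Fin m) (x : α), j ∈ order → x ∈ S j → x ∈ U →
      ∃ k ∈ greedyList S order U, x ∈ S k := by
  induction U using Finset.strongInductionOn with
  | _ U ih =>
    rintro (_ | ⟨b, rest⟩) j x hj hxj hxU
    · simp at hj
    set best := bestIdx S U rest b
    have hjx : 0 < (S j ∩ U).card := card_pos.mpr ⟨x, mem_inter.mpr ⟨hxj, hxU⟩⟩
    have hbest : (S best ∩ U).Nonempty := card_pos.mp <| hjx.trans_le <|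
      card_inter_le_bestIdx S U rest b j (List.mem_cons.mp hj)
    rw [greedyList, dif_pos hbest]
    by_cases hxb : x ∈ S best
    · exact ⟨best, List.mem_cons_self, hxb⟩
    · obtain ⟨k, hk, hxk⟩ := ih _ (sdiff_ssubset_of_inter_nonempty hbest) (b :: rest) j x hj hxj
        (mem_sdiff.mpr ⟨hxU, hxb⟩)
      exact ⟨k, List.mem_cons_of_mem _ hk, hxk⟩

lemma nonempty_of_mem_greedyList (S : Fin m → Finset α) (U : Finset α) :
    ∀ (order : List (Fin m)) (i : Fin m), i ∈ greedyList S order U → (S i).Nonempty := by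
  induction U using Finset.strongInductionOn with
  | _ U ih =>
    rintro (_ | ⟨b, rest⟩) i hi
    · simp [greedyList] at hi
    rw [greedyList] at hi
    split_ifs at hi with hbest
    · rcases List.mem_cons.mp hi with rfl | hi
      · exact hbest.mono inter_subset_left
      · exact ih _ (sdiff_ssubset_of_inter_nonempty hbest) _ _ hi
    · simp at hi

end GreedyCover

section Selection

variable {α : Type*} [DecidableEq α] {m : ℕ}

lemma probSel_le_one (S : Fin m → Finset α) (i : Fin m) : probSel S i ≤ 1 := by
  rw [probSel, div_le_one (by positivity)]
  exact_mod_cast (card_filter_le _ _).trans_eq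
    (by rw [card_univ, Fintype.card_perm, Fintype.card_fin])

lemma probSel_eq_one_of_forall_mem {S : Fin m → Finset α} {i : Fin m}
    (h : ∀ π : Equiv.Perm (Fin m), i ∈ greedyList S ((List.finRange m).map π) (unionSet S)) :
    probSel S i = 1 := by
  rw [probSel, filter_true_of_mem fun π _ => h π, card_univ, Fintype.card_perm,
    Fintype.card_fin, div_self (by positivity)]

lemma probSel_eq_zero_of_eq_empty {S : Fin m → Finset α} {i : Fin m} (h : S i = ∅) :
    probSel S i = 0 := by
  rw [probSel, filter_false_of_mem, card_empty, Nat.cast_zero, zero_div]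
  intro π _ hi
  simpa [h] using nonempty_of_mem_greedyList S _ _ i hi

lemma probSel_eq_one_of_distinct_singletons {S : Fin m → Finset α}
    (hsing : ∀ i : Fin m, ∃ e : α, S i = {e}) (hdist : ∀ i j : Fin m, i ≠ j → S i ≠ S j)
    (i : Fin m) : probSel S i = 1 := by
  obtain ⟨e, he⟩ := hsing i
  refine probSel_eq_one_of_forall_mem fun π => ?_
  have hi : i ∈ (List.finRange m).map π :=
    List.mem_map.mpr ⟨π.symm i, List.mem_finRange _, π.apply_symm_apply i⟩
  have heS : e ∈ S i := he ▸ mem_singleton_self e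
  obtain ⟨k, hk, hek⟩ := exists_mem_greedyList_of_mem S (unionSet S) _ i e hi heS
    (mem_biUnion.mpr ⟨i, mem_univ i, heS⟩)
  obtain ⟨e', he'⟩ := hsing k
  rw [he', mem_singleton] at hek
  have hki : S k = S i := by rw [he', he, hek]
  obtain rfl : k = i := of_not_not fun hne => hdist k i hne hki
  exact hk

end Selection

theorem scigN_distinct_singletons_nash_general {α : Type*} [DecidableEq α] {m : ℕ}
    (beta alpha : ℝ) (halpha : 0 < alpha)
    (hab : alpha < beta)
    (S : Fin m → Finset α)
    (hsing : ∀ i : Fin m, ∃ e : α, S i = {e})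
    (hdist : ∀ i j : Fin m, i ≠ j → S i ≠ S j) :
    IsNashN beta alpha S := by
  intro i T
  obtain ⟨e, he⟩ := hsing i
  simp only [utilN, probSel_eq_one_of_distinct_singletons hsing hdist i, he, card_singleton,
    Function.update_self, Nat.cast_one, mul_one]
  rcases T.eq_empty_or_nonempty with rfl | hT
  · rw [probSel_eq_zero_of_eq_empty (Function.update_self i ∅ S)]
    simp only [card_empty, Nat.cast_zero]
    linarith
  · have hcost : (1 : ℝ) ≤ T.card := by exact_mod_cast card_pos.mpr hT
    have hgain := probSel_le_one (Function.update S i T) i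
    nlinarith

/-- With the non-deterministic greedy algorithm, if m ≤ n and
α < β, any joint strategy of pairwise distinct single-element subsets is a
pure Nash equilibrium. -/
theorem scigN_distinct_singletons_nash {α : Type*} [Fintype α] [DecidableEq α] {m : ℕ}
    (beta alpha : ℝ) (hbeta : 0 < beta) (halpha : 0 < alpha)
    (hmn : m ≤ Fintype.card α) (hab : alpha < beta)
    (S : Fin m → Finset α)
    (hsing : ∀ i : Fin m, ∃ e : α, S i = {e})
    (hdist : ∀ i j : Fin m, i ≠ j → S i ≠ S j) :
    IsNashN beta alpha S :=
  scigN_distinct_singletons_nash_general beta alpha halpha hab S hsing hdist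
end

section
/- In the set-cover instance game with the non-deterministic greedy algorithm and α < β/2, a joint strategy in which exactly one agent chooses S_i = U and all other agents choose the empty set is not a pure Nash equilibrium (the agent with S_i = U can strictly improve by deviating to a single-element strategy), provided n = |U| ≥ 2. -/
open Finset

section SoleNonemptyAgent

variable {α : Type*} [DecidableEq α] {m : ℕ} {S : Fin m → Finset α} {i : Fin m}

theorem bestIdx_eq_of_forall_ne {U : Finset α} (hi : (S i ∩ U).Nonempty)
    (hzero : ∀ j ≠ i, S j ∩ U = ∅) :
    ∀ (l : List (Fin m)) (b : Fin m), (b = i ∨ i ∈ l) → bestIdx S U l b = i := by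
  have hlt : ∀ j ≠ i, (S j ∩ U).card < (S i ∩ U).card := fun j hj => by
    simpa [hzero j hj] using hi
  intro l
  induction l with
  | nil =>
    intro b hb
    simpa [bestIdx] using hb
  | cons j rest ih =>
    intro b hb
    rw [bestIdx]
    apply ih
    by_cases hrest : i ∈ rest
    · exact .inr hrest
    left
    have hbj : b = i ∨ j = i := by simpa [hrest, eq_comm] using hb
    split_ifs with hbeat
    · rcases hbj with rfl | rfl
      · by_contra hj
        exact lt_asymm hbeat (hlt j hj)
      · rfl
    · rcases hbj with rfl | rfl
      · rfl
      · by_contra hb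
        exact hbeat (hlt b hb)

theorem mem_greedyList_of_forall_ne {U : Finset α} (hi : (S i ∩ U).Nonempty)
    (hzero : ∀ j ≠ i, S j ∩ U = ∅) {l : List (Fin m)} (hl : i ∈ l) :
    i ∈ greedyList S l U := by
  cases l with
  | nil => simp at hl
  | cons b rest =>
    have hbest : bestIdx S U rest b = i :=
      bestIdx_eq_of_forall_ne hi hzero rest b (by simpa [eq_comm] using hl)
    rw [greedyList]
    simp only [hbest, dif_pos hi, List.mem_cons_self]

theorem unionSet_eq_of_forall_ne (hzero : ∀ j ≠ i, S j = ∅) : unionSet S = S i := by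
  refine subset_antisymm (fun x hx => ?_) (subset_biUnion_of_mem S (mem_univ i))
  obtain ⟨j, -, hxj⟩ := mem_biUnion.mp hx
  by_cases hj : j = i
  · exact hj ▸ hxj
  · simp [hzero j hj] at hxj

theorem probSel_eq_one_of_forall_ne (hi : (S i).Nonempty) (hzero : ∀ j ≠ i, S j = ∅) :
    probSel S i = 1 := by
  have hU := unionSet_eq_of_forall_ne hzero
  have hselected : ∀ π : Equiv.Perm (Fin m),
      i ∈ greedyList S ((List.finRange m).map π) (unionSet S) := fun π =>
    mem_greedyList_of_forall_ne (by rwa [hU, inter_self])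
      (fun j hj => by simp [hzero j hj])
      (List.mem_map.mpr ⟨π.symm i, List.mem_finRange _, π.apply_symm_apply i⟩)
  rw [probSel, filter_true_of_mem (fun π _ => hselected π), card_univ, Fintype.card_perm,
    Fintype.card_fin, div_self (by exact_mod_cast (Nat.factorial_pos m).ne')]

theorem utilN_eq_of_forall_ne (beta alpha : ℝ) (hi : (S i).Nonempty)
    (hzero : ∀ j ≠ i, S j = ∅) :
    utilN beta alpha S i = beta - alpha * (S i).card := by
  rw [utilN, probSel_eq_one_of_forall_ne hi hzero, mul_one]

end SoleNonemptyAgent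

theorem scigN_single_full_not_nash_general {α : Type*} [Fintype α] [DecidableEq α] {m : ℕ}
    (beta alpha : ℝ) (halpha : 0 < alpha)
    (hn : 2 ≤ Fintype.card α)
    (S : Fin m → Finset α) (i : Fin m) (hi : S i = Finset.univ)
    (hothers : ∀ j : Fin m, j ≠ i → S j = ∅) :
    ¬ IsNashN beta alpha S := by
  intro hnash
  obtain ⟨x⟩ : Nonempty α := Fintype.card_pos_iff.mp (by omega)
  -- Agent `i` stays the only agent with a nonempty strategy, so it is still selected surely.
  have hdeviation := hnash i {x}
  rw [utilN_eq_of_forall_ne beta alpha (by simp)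
      (fun j hj => by rw [Function.update_of_ne hj, hothers j hj]),
    utilN_eq_of_forall_ne beta alpha ⟨x, by simp [hi]⟩ hothers] at hdeviation
  simp only [Function.update_self, card_singleton, hi, card_univ, Nat.cast_one] at hdeviation
  have hcard : (2 : ℝ) ≤ Fintype.card α := by exact_mod_cast hn
  nlinarith

/-- With the non-deterministic greedy algorithm and α < β/2
(and n ≥ 2), a joint strategy with exactly one agent choosing all of U and all
others choosing ∅ is not a pure Nash equilibrium. -/
theorem scigN_single_full_not_nash {α : Type*} [Fintype α] [DecidableEq α] {m : ℕ}
    (beta alpha : ℝ) (hbeta : 0 < beta) (halpha : 0 < alpha)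
    (hab : alpha < beta / 2) (hn : 2 ≤ Fintype.card α)
    (S : Fin m → Finset α) (i : Fin m) (hi : S i = Finset.univ)
    (hothers : ∀ j : Fin m, j ≠ i → S j = ∅) :
    ¬ IsNashN beta alpha S :=
  scigN_single_full_not_nash_general beta alpha halpha hn S i hi hothers
end
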